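/- Let λ ∈ ℝ with λ ≠ 0, T > 0, B > 0. Then the infimum, over all measurable w : [0,T] → ℝ with w(t) > 0 almost everywhere, t ↦ e^{λ(T−t)}·w(t) integrable, and ∫₀ᵀ w(t)^{−2} dt ≤ B, of the quantity ∫₀ᵀ e^{λ(T−t)}·w(t) dt, equals B^{−1/2}·( 3(e^{2λT/3} − 1)/(2λ) )^{3/2}, and the infimum is attained at w(t) = (I/B)^{1/2}·e^{−λ(T−t)/3} where I = 3(e^{2λT/3} − 1)/(2λ). -/

import Mathlib

/-!
Hölder's inequality with exponents `3/2` and `3`, applied to `(e w)^{2/3}` and `(w⁻²)^{1/3}`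
where `e t = e^{λ(T−t)}`, bounds `I = ∫₀ᵀ e^{2/3}` by `(∫₀ᵀ e w)^{2/3} (∫₀ᵀ w⁻²)^{1/3}`, whence
`∫₀ᵀ e w ≥ B^{−1/2} I^{3/2}`. Equality in Hölder holds when `e w` is proportional to `w⁻²`,
i.e. `w ∝ e^{−1/3}`, and the budget constraint fixes the constant.
-/

open MeasureTheory Set

theorem integral_exp_mul_sub (c T : ℝ) (hc : c ≠ 0) :
    ∫ t in (0:ℝ)..T, Real.exp (c * (T - t)) = (Real.exp (c * T) - 1) / c := by
  simp only [mul_sub]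
  rw [intervalIntegral.integral_comp_sub_mul Real.exp hc, integral_exp]
  simp [div_eq_inv_mul]

theorem lintegral_Icc_ofReal_eq {f : ℝ → ℝ} {a b : ℝ} (hab : a ≤ b)
    (hf : IntegrableOn f (Icc a b)) (hf0 : ∀ᵐ t ∂volume.restrict (Icc a b), 0 ≤ f t) :
    ∫⁻ t in Icc a b, ENNReal.ofReal (f t) = ENNReal.ofReal (∫ t in a..b, f t) := by
  rw [← ofReal_integral_eq_lintegral_ofReal hf hf0, integral_Icc_eq_integral_Ioc,
    intervalIntegral.integral_of_le hab]

theorem lintegral_rpow_two_thirds_le {α : Type*} [MeasurableSpace α] (μ : Measure α)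
    {ρ w : α → ℝ} (hρ : Measurable ρ) (hw : Measurable w) (hρ0 : ∀ x, 0 ≤ ρ x)
    (hw0 : ∀ᵐ x ∂μ, 0 < w x) :
    ∫⁻ x, ENNReal.ofReal (ρ x ^ (2/3 : ℝ)) ∂μ ≤
      (∫⁻ x, ENNReal.ofReal (ρ x * w x) ∂μ) ^ (2/3 : ℝ) *
        (∫⁻ x, ENNReal.ofReal ((w x ^ 2)⁻¹) ∂μ) ^ (1/3 : ℝ) := by
  have hpq : Real.HolderConjugate (3/2) 3 := ⟨by norm_num, by norm_num, by norm_num⟩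
  set f : α → ENNReal := fun x => ENNReal.ofReal (ρ x * w x) ^ (2/3 : ℝ)
  set g : α → ENNReal := fun x => ENNReal.ofReal ((w x ^ 2)⁻¹) ^ (1/3 : ℝ)
  have hf : AEMeasurable f μ := ((hρ.mul hw).ennreal_ofReal.pow_const _).aemeasurable
  have hg : AEMeasurable g μ := (((hw.pow_const 2).inv).ennreal_ofReal.pow_const _).aemeasurable
  have hfg : (fun x => (f * g) x) =ᵐ[μ] fun x => ENNReal.ofReal (ρ x ^ (2/3 : ℝ)) := by
    filter_upwards [hw0] with x hx
    have hw2 : ((w x ^ 2)⁻¹) ^ (1/3 : ℝ) = (w x ^ (2/3 : ℝ))⁻¹ := by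
      rw [Real.inv_rpow (by positivity), ← Real.rpow_natCast, ← Real.rpow_mul hx.le]
      norm_num
    simp only [Pi.mul_apply, f, g]
    rw [ENNReal.ofReal_rpow_of_nonneg (mul_nonneg (hρ0 x) hx.le) (by norm_num),
      ENNReal.ofReal_rpow_of_nonneg (by positivity) (by norm_num),
      ← ENNReal.ofReal_mul (Real.rpow_nonneg (mul_nonneg (hρ0 x) hx.le) _),
      Real.mul_rpow (hρ0 x) hx.le, hw2, mul_assoc,
      mul_inv_cancel₀ (Real.rpow_pos_of_pos hx _).ne', mul_one]
  have hf32 : ∀ x, f x ^ (3/2 : ℝ) = ENNReal.ofReal (ρ x * w x) := fun x => by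
    simp only [f, ← ENNReal.rpow_mul]; norm_num
  have hg3 : ∀ x, g x ^ (3 : ℝ) = ENNReal.ofReal ((w x ^ 2)⁻¹) := fun x => by
    simp only [g, ← ENNReal.rpow_mul]; norm_num
  calc ∫⁻ x, ENNReal.ofReal (ρ x ^ (2/3 : ℝ)) ∂μ = ∫⁻ x, (f * g) x ∂μ :=
        (lintegral_congr_ae hfg).symm
    _ ≤ (∫⁻ x, f x ^ (3/2 : ℝ) ∂μ) ^ (1 / (3/2) : ℝ) *
          (∫⁻ x, g x ^ (3 : ℝ) ∂μ) ^ (1 / 3 : ℝ) :=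
      ENNReal.lintegral_mul_le_Lp_mul_Lq μ hpq hf hg
    _ = _ := by simp only [hf32, hg3]; norm_num

theorem rpow_three_halves_le_sqrt_mul_integral {ρ w : ℝ → ℝ} {a b B : ℝ} (hab : a ≤ b)
    (hB : 0 ≤ B) (hρ : Continuous ρ) (hρ0 : ∀ t, 0 ≤ ρ t) (hw : Measurable w)
    (hw0 : ∀ᵐ t ∂volume.restrict (Icc a b), 0 < w t)
    (hint : IntegrableOn (fun t => ρ t * w t) (Icc a b))
    (hbud : ∫⁻ t in Icc a b, ENNReal.ofReal ((w t ^ 2)⁻¹) ≤ ENNReal.ofReal B) :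
    (∫ t in a..b, ρ t ^ (2/3 : ℝ)) ^ (3/2 : ℝ) ≤
      B ^ (1/2 : ℝ) * ∫ t in a..b, ρ t * w t := by
  set I := ∫ t in a..b, ρ t ^ (2/3 : ℝ)
  set J := ∫ t in a..b, ρ t * w t
  have hρw0 : ∀ᵐ t ∂volume.restrict (Icc a b), 0 ≤ ρ t * w t := by
    filter_upwards [hw0] with t ht using mul_nonneg (hρ0 t) ht.le
  have hI0 : 0 ≤ I := intervalIntegral.integral_nonneg hab fun t _ => Real.rpow_nonneg (hρ0 t) _
  have hJ0 : 0 ≤ J := intervalIntegral.integral_nonneg_of_ae_restrict hab hρw0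
  have hholder : ENNReal.ofReal I ≤ ENNReal.ofReal (J ^ (2/3 : ℝ) * B ^ (1/3 : ℝ)) := by
    have h := lintegral_rpow_two_thirds_le (volume.restrict (Icc a b)) hρ.measurable hw hρ0 hw0
    rw [lintegral_Icc_ofReal_eq hab
        ((hρ.rpow_const fun _ => Or.inr (by norm_num)).integrableOn_Icc)
        (ae_of_all _ fun t => Real.rpow_nonneg (hρ0 t) _),
      lintegral_Icc_ofReal_eq hab hint hρw0] at h
    refine h.trans ?_
    rw [ENNReal.ofReal_mul (Real.rpow_nonneg hJ0 _),
      ← ENNReal.ofReal_rpow_of_nonneg hJ0 (by norm_num),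
      ← ENNReal.ofReal_rpow_of_nonneg hB (by norm_num)]
    gcongr
  have hI_le : I ≤ J ^ (2/3 : ℝ) * B ^ (1/3 : ℝ) :=
    (ENNReal.ofReal_le_ofReal_iff (by positivity)).mp hholder
  calc I ^ (3/2 : ℝ) ≤ (J ^ (2/3 : ℝ) * B ^ (1/3 : ℝ)) ^ (3/2 : ℝ) := by gcongr
    _ = B ^ (1/2 : ℝ) * J := by
      rw [Real.mul_rpow (by positivity) (by positivity), ← Real.rpow_mul hJ0,
        ← Real.rpow_mul hB, mul_comm]
      norm_num

theorem optimal_weight_budget_and_value {lam T B I : ℝ} (hT : 0 ≤ T) (hB : 0 < B) (hI : 0 < I)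
    (hIint : ∫ t in (0:ℝ)..T, Real.exp (2 * lam / 3 * (T - t)) = I) (w : ℝ → ℝ)
    (hw : ∀ t, w t = (I / B) ^ ((1:ℝ)/2) * Real.exp (-(lam * (T - t)) / 3)) :
    (∫⁻ t in Icc (0:ℝ) T, ENNReal.ofReal ((w t ^ 2)⁻¹)) = ENNReal.ofReal B ∧
      ∫ t in (0:ℝ)..T, Real.exp (lam * (T - t)) * w t = B ^ (-(1:ℝ)/2) * I ^ ((3:ℝ)/2) := by
  set s := (I / B) ^ ((1:ℝ)/2) with hs
  have hs2 : s ^ 2 = I / B := by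
    rw [← Real.rpow_natCast, ← Real.rpow_mul (div_pos hI hB).le]
    norm_num
  have hbudget : ∀ t, (w t ^ 2)⁻¹ = B / I * Real.exp (2 * lam / 3 * (T - t)) := fun t => by
    rw [hw, mul_pow, hs2, ← Real.exp_nat_mul, mul_inv, inv_div, ← Real.exp_neg]
    congr 2
    push_cast
    ring
  have hvalue : ∀ t, Real.exp (lam * (T - t)) * w t = s * Real.exp (2 * lam / 3 * (T - t)) :=
    fun t => by
      rw [hw, mul_left_comm, ← Real.exp_add]
      ring_nf
  constructor
  · simp only [hbudget]
    rw [lintegral_Icc_ofReal_eq hT (Continuous.integrableOn_Icc (by fun_prop))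
      (ae_of_all _ fun t => by positivity), intervalIntegral.integral_const_mul, hIint,
      div_mul_cancel₀ _ hI.ne']
  · simp only [hvalue]
    rw [intervalIntegral.integral_const_mul, hIint, hs, Real.div_rpow hI.le hB.le,
      show (-(1:ℝ)/2) = -((1:ℝ)/2) by norm_num, Real.rpow_neg hB.le,
      show ((3:ℝ)/2) = (1:ℝ)/2 + 1 by norm_num, Real.rpow_add hI, Real.rpow_one]
    ring

/-- The infimum over all measurable a.e.-positive `w` on `[0,T]` with
`e^{λ(T−t)} w t` integrable and budget `∫₀ᵀ (w t)⁻² dt ≤ B` of `∫₀ᵀ e^{λ(T−t)} w t dt`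
equals `B^{−1/2} (3(e^{2λT/3}−1)/(2λ))^{3/2}`, and is attained at
`w t = (I/B)^{1/2} e^{−λ(T−t)/3}` with `I = 3(e^{2λT/3}−1)/(2λ)`. -/
theorem stmt_5 (lam T B : ℝ) (hlam : lam ≠ 0) (hT : 0 < T) (hB : 0 < B) :
    IsLeast {y : ℝ | ∃ w : ℝ → ℝ, Measurable w ∧
        (∀ᵐ t ∂(volume.restrict (Icc (0:ℝ) T)), 0 < w t) ∧
        IntegrableOn (fun t => Real.exp (lam * (T - t)) * w t) (Icc 0 T) ∧
        (∫⁻ t in Icc (0:ℝ) T, ENNReal.ofReal ((w t ^ 2)⁻¹)) ≤ ENNReal.ofReal B ∧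
        y = ∫ t in (0:ℝ)..T, Real.exp (lam * (T - t)) * w t}
      (B ^ (-(1:ℝ)/2) * (3 * (Real.exp (2 * lam * T / 3) - 1) / (2 * lam)) ^ ((3:ℝ)/2)) ∧
    ∀ w : ℝ → ℝ,
      (∀ t, w t = ((3 * (Real.exp (2 * lam * T / 3) - 1) / (2 * lam)) / B) ^ ((1:ℝ)/2) *
          Real.exp (-(lam * (T - t)) / 3)) →
      ((∫⁻ t in Icc (0:ℝ) T, ENNReal.ofReal ((w t ^ 2)⁻¹)) ≤ ENNReal.ofReal B ∧
        (∫ t in (0:ℝ)..T, Real.exp (lam * (T - t)) * w t) =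
          B ^ (-(1:ℝ)/2) * (3 * (Real.exp (2 * lam * T / 3) - 1) / (2 * lam)) ^ ((3:ℝ)/2)) := by
  set I := 3 * (Real.exp (2 * lam * T / 3) - 1) / (2 * lam) with hIdef
  have hIint : ∫ t in (0:ℝ)..T, Real.exp (2 * lam / 3 * (T - t)) = I := by
    rw [integral_exp_mul_sub _ _ (by positivity),
      show 2 * lam / 3 * T = 2 * lam * T / 3 by ring, hIdef]
    field_simp
  have hI : 0 < I := hIint ▸ intervalIntegral.intervalIntegral_pos_of_pos_on
    (Continuous.intervalIntegrable (by fun_prop) _ _) (fun t _ => Real.exp_pos _) hT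
  have hopt := optimal_weight_budget_and_value hT.le hB hI hIint
  refine ⟨⟨?_, ?_⟩, fun w hw => (hopt w hw).imp_left le_of_eq⟩
  · set w₀ := fun t => (I / B) ^ ((1:ℝ)/2) * Real.exp (-(lam * (T - t)) / 3)
    have hw₀ : Continuous w₀ := by fun_prop
    obtain ⟨hbudget, hvalue⟩ := hopt w₀ fun _ => rfl
    exact ⟨w₀, hw₀.measurable, ae_of_all _ fun t => by positivity,
      Continuous.integrableOn_Icc (by fun_prop), hbudget.le, hvalue.symm⟩
  · rintro _ ⟨w, hw, hw0, hint, hbud, rfl⟩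
    have hbound := rpow_three_halves_le_sqrt_mul_integral hT.le hB.le
      (ρ := fun t => Real.exp (lam * (T - t))) (by fun_prop) (fun _ => (Real.exp_pos _).le)
      hw hw0 hint hbud
    simp only [← Real.exp_mul, show ∀ t, lam * (T - t) * (2/3) = 2 * lam / 3 * (T - t) from
      fun t => by ring, hIint] at hbound
    rw [show (-(1:ℝ)/2) = -((1:ℝ)/2) by norm_num, Real.rpow_neg hB.le,
      inv_mul_le_iff₀ (by positivity)]
    exact hbound
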